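/- Let g_{ij} be a smooth symmetric 2-tensor on ℝ^n, D a bounded open set with Lipschitz boundary Σ = ∂D with outward Euclidean unit normal ν, and X^i = x^i. Then ∫_Σ (−g_{ki,kj} − g_{kj,ki} + g_{ij,kk} + g_{kk,ij}) x^i ν^j dσ = (n−2) ∫_Σ (g_{kj,k} − g_{kk,j}) ν^j dσ + ∫_Σ (−g_{kj,kj} + g_{kk,jj}) x^i ν^i dσ, where commas denote partial derivatives and repeated indices are summed. -/

import Mathlib

open MeasureTheory
open scoped BigOperators

noncomputable abbrev E (n : ℕ) := EuclideanSpace ℝ (Fin n)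

/-- Partial derivative ∂f/∂xᵏ with respect to the standard coordinates. -/
noncomputable def pd (n : ℕ) (k : Fin n) (f : E n → ℝ) (x : E n) : ℝ :=
  fderiv ℝ f x (EuclideanSpace.single k 1)

/-- Second partial derivative ∂²f/∂xᵏ∂xˡ. -/
noncomputable def pd2 (n : ℕ) (k l : Fin n) (f : E n → ℝ) (x : E n) : ℝ :=
  pd n k (pd n l f) x

section Helpers
variable {n : ℕ}

lemma contDiff_coord (i : Fin n) : ContDiff ℝ (⊤ : ℕ∞) (fun y : E n => y i) :=
  (EuclideanSpace.proj i : E n →L[ℝ] ℝ).contDiff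

lemma contDiff_pd (k : Fin n) {f : E n → ℝ} (hf : ContDiff ℝ (⊤ : ℕ∞) f) :
    ContDiff ℝ (⊤ : ℕ∞) (pd n k f) := by
  have := (ContinuousLinearMap.apply ℝ ℝ (EuclideanSpace.single k 1)).contDiff.comp
    (hf.fderiv_right (m := (⊤ : ℕ∞)) (by simp))
  exact this

lemma diffAt_pd (k : Fin n) {f : E n → ℝ} (hf : ContDiff ℝ (⊤ : ℕ∞) f) (x : E n) :
    DifferentiableAt ℝ (pd n k f) x :=
  ((contDiff_pd k hf).differentiable (by simp)).differentiableAt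

lemma pd_comm (a b : Fin n) {f : E n → ℝ} (hf : ContDiff ℝ (⊤ : ℕ∞) f) (x : E n) :
    pd n a (pd n b f) x = pd n b (pd n a f) x := by
  have hx : ContDiffAt ℝ 2 f x := (hf.of_le (WithTop.coe_le_coe.mpr le_top)).contDiffAt
  have hsymm := hx.isSymmSndFDerivAt (by norm_num)
  have key : ∀ v w : E n, fderiv ℝ (fun y => fderiv ℝ f y v) x w
      = fderiv ℝ (fderiv ℝ f) x w v := by
    intro v w
    have h1 : DifferentiableAt ℝ (fderiv ℝ f) x :=
      ((hf.fderiv_right (m := (⊤ : ℕ∞)) (by simp)).differentiable (by simp)).differentiableAt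
    have := ((ContinuousLinearMap.apply ℝ ℝ v).hasFDerivAt.comp x h1.hasFDerivAt).fderiv
    rw [Function.comp_def] at this
    simp only [ContinuousLinearMap.apply_apply] at this
    rw [this]; rfl
  show fderiv ℝ (fun y => fderiv ℝ f y (EuclideanSpace.single b 1)) x (EuclideanSpace.single a 1) = _
  rw [key, hsymm]
  exact (key _ _).symm

lemma pd_sum {ι : Type*} (s : Finset ι) (k : Fin n) (f : ι → E n → ℝ) (x : E n)
    (hf : ∀ i ∈ s, DifferentiableAt ℝ (f i) x) :
    pd n k (fun y => ∑ i ∈ s, f i y) x = ∑ i ∈ s, pd n k (f i) x := by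
  unfold pd
  rw [fderiv_fun_sum hf]
  simp

lemma pd_mul (k : Fin n) {f h : E n → ℝ} (x : E n)
    (hf : DifferentiableAt ℝ f x) (hh : DifferentiableAt ℝ h x) :
    pd n k (fun y => f y * h y) x = pd n k f x * h x + f x * pd n k h x := by
  unfold pd
  rw [fderiv_fun_mul hf hh]
  simp; ring

lemma pd_coord (k i : Fin n) (x : E n) :
    pd n k (fun y : E n => y i) x = if i = k then 1 else 0 := by
  unfold pd
  rw [show (fun y : E n => y i) = (EuclideanSpace.proj i : E n →L[ℝ] ℝ) from rfl,
    ContinuousLinearMap.fderiv]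
  simp [EuclideanSpace.single_apply]

lemma pd_comb4 {a b c d : E n → ℝ} (k : Fin n) (x : E n)
    (ha : DifferentiableAt ℝ a x) (hb : DifferentiableAt ℝ b x)
    (hc : DifferentiableAt ℝ c x) (hd : DifferentiableAt ℝ d x) :
    pd n k (fun y => -a y - b y + c y + d y) x
      = -pd n k a x - pd n k b x + pd n k c x + pd n k d x := by
  unfold pd
  rw [show (fun y => -a y - b y + c y + d y) = -a - b + c + d from rfl,
    ((((ha.hasFDerivAt.neg).sub hb.hasFDerivAt).add hc.hasFDerivAt).add
    hd.hasFDerivAt).fderiv]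
  simp

lemma pd_comb2 {a b : E n → ℝ} (k : Fin n) (x : E n)
    (ha : DifferentiableAt ℝ a x) (hb : DifferentiableAt ℝ b x) :
    pd n k (fun y => a y - b y) x = pd n k a x - pd n k b x := by
  unfold pd
  rw [show (fun y => a y - b y) = a - b from rfl, (ha.hasFDerivAt.sub hb.hasFDerivAt).fderiv]
  simp

lemma pd_comb2' {a b : E n → ℝ} (k : Fin n) (x : E n)
    (ha : DifferentiableAt ℝ a x) (hb : DifferentiableAt ℝ b x) :
    pd n k (fun y => -a y + b y) x = -pd n k a x + pd n k b x := by
  unfold pd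
  rw [show (fun y => -a y + b y) = -a + b from rfl, ((ha.hasFDerivAt.neg).add hb.hasFDerivAt).fderiv]
  simp

end Helpers

section Main
variable {n : ℕ} (g : E n → Matrix (Fin n) (Fin n) ℝ)

/-- The bracket appearing in the left-hand boundary integrand. -/
noncomputable def Bfun (i j : Fin n) : E n → ℝ := fun y =>
  ∑ k, (-pd2 n k j (fun z => g z k i) y - pd2 n k i (fun z => g z k j) y
      + pd2 n k k (fun z => g z i j) y + pd2 n i j (fun z => g z k k) y)

/-- The scalar S = −g_{kj,kj} + g_{kk,jj}. -/
noncomputable def Sfun : E n → ℝ := fun y =>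
  ∑ k, ∑ j, (-pd2 n k j (fun z => g z k j) y + pd2 n j j (fun z => g z k k) y)

/-- The bracket in the first right-hand boundary integrand. -/
noncomputable def F1fun (j : Fin n) : E n → ℝ := fun y =>
  ∑ k, (pd n k (fun z => g z k j) y - pd n j (fun z => g z k k) y)

variable (hg : ∀ i j, ContDiff ℝ (⊤ : ℕ∞) (fun x => g x i j))

section
include hg

lemma contDiff_pd2 (k l i j : Fin n) :
    ContDiff ℝ (⊤ : ℕ∞) (pd2 n k l (fun z => g z i j)) :=
  contDiff_pd k (contDiff_pd l (hg i j))

lemma contDiff_Bfun (i j : Fin n) : ContDiff ℝ (⊤ : ℕ∞) (Bfun g i j) := by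
  refine ContDiff.sum fun k _ => ((((contDiff_pd2 g hg k j k i).neg.sub
    (contDiff_pd2 g hg k i k j)).add (contDiff_pd2 g hg k k i j)).add
    (contDiff_pd2 g hg i j k k))

lemma contDiff_Sfun : ContDiff ℝ (⊤ : ℕ∞) (Sfun g) := by
  refine ContDiff.sum fun k _ => ContDiff.sum fun j _ =>
    ((contDiff_pd2 g hg k j k j).neg.add (contDiff_pd2 g hg j j k k))

lemma contDiff_F1fun (j : Fin n) : ContDiff ℝ (⊤ : ℕ∞) (F1fun g j) := by
  refine ContDiff.sum fun k _ =>
    ((contDiff_pd k (hg k j)).sub (contDiff_pd j (hg k k)))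

lemma contDiff_FL (j : Fin n) : ContDiff ℝ (⊤ : ℕ∞) (fun y => ∑ i, Bfun g i j y * y i) :=
  ContDiff.sum fun i _ => (contDiff_Bfun g hg i j).mul (contDiff_coord i)

lemma contDiff_F2 (i : Fin n) : ContDiff ℝ (⊤ : ℕ∞) (fun y => Sfun g y * y i) :=
  (contDiff_Sfun g hg).mul (contDiff_coord i)

/-- Expansion of pd of Bfun into third derivatives. -/
lemma pd_Bfun (i j l : Fin n) (x : E n) :
    pd n l (Bfun g i j) x
      = ∑ k, (-pd n l (pd2 n k j (fun z => g z k i)) x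
          - pd n l (pd2 n k i (fun z => g z k j)) x
          + pd n l (pd2 n k k (fun z => g z i j)) x
          + pd n l (pd2 n i j (fun z => g z k k)) x) := by
  unfold Bfun
  rw [pd_sum]
  · exact Finset.sum_congr rfl fun k _ => pd_comb4 l x
      (((contDiff_pd2 g hg k j k i).differentiable (by simp)).differentiableAt)
      (((contDiff_pd2 g hg k i k j).differentiable (by simp)).differentiableAt)
      (((contDiff_pd2 g hg k k i j).differentiable (by simp)).differentiableAt)
      (((contDiff_pd2 g hg i j k k).differentiable (by simp)).differentiableAt)
  · intro k _
    exact ((((contDiff_pd2 g hg k j k i).neg.sub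
      (contDiff_pd2 g hg k i k j)).add (contDiff_pd2 g hg k k i j)).add
      (contDiff_pd2 g hg i j k k)).differentiable (by simp) |>.differentiableAt

lemma pd_Sfun (i : Fin n) (x : E n) :
    pd n i (Sfun g) x
      = ∑ k, ∑ j, (-pd n i (pd2 n k j (fun z => g z k j)) x
          + pd n i (pd2 n j j (fun z => g z k k)) x) := by
  unfold Sfun
  rw [pd_sum]
  · refine Finset.sum_congr rfl fun k _ => ?_
    rw [pd_sum]
    · exact Finset.sum_congr rfl fun j _ => pd_comb2' i x
        (((contDiff_pd2 g hg k j k j).differentiable (by simp)).differentiableAt)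
        (((contDiff_pd2 g hg j j k k).differentiable (by simp)).differentiableAt)
    · intro j _
      exact (((contDiff_pd2 g hg k j k j).neg.add
        (contDiff_pd2 g hg j j k k)).differentiable (by simp)).differentiableAt
  · intro k _
    exact ((ContDiff.sum fun j _ => (contDiff_pd2 g hg k j k j).neg.add
      (contDiff_pd2 g hg j j k k)).differentiable (by simp)).differentiableAt

end
end Main

section Swap
variable {n : ℕ}

lemma t_swap12 (a b c : Fin n) {f : E n → ℝ} (hf : ContDiff ℝ (⊤ : ℕ∞) f) (x : E n) :
    pd n a (pd2 n b c f) x = pd n b (pd2 n a c f) x :=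
  pd_comm a b (contDiff_pd c hf) x

lemma t_swap23 (a b c : Fin n) {f : E n → ℝ} (hf : ContDiff ℝ (⊤ : ℕ∞) f) (x : E n) :
    pd n a (pd2 n b c f) x = pd n a (pd2 n c b f) x := by
  have h : pd2 n b c f = pd2 n c b f := funext fun y => pd_comm b c hf y
  rw [h]

end Swap

section Main2
variable {n : ℕ} (g : E n → Matrix (Fin n) (Fin n) ℝ)
  (hg : ∀ i j, ContDiff ℝ (⊤ : ℕ∞) (fun x => g x i j))
  (hsymm : ∀ x i j, g x i j = g x j i)

include hg hsymm in
lemma pdB_sum (i : Fin n) (x : E n) :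
    ∑ j, pd n j (Bfun g i j) x = pd n i (Sfun g) x := by
  have hGsymm : ∀ a b : Fin n, (fun z => g z a b) = (fun z => g z b a) :=
    fun a b => funext fun z => hsymm z a b
  simp only [pd_Bfun g hg, pd_Sfun g hg]
  -- abbreviations for the four families of terms
  have h3 : ∑ j, ∑ k, pd n j (pd2 n k j (fun z => g z k i)) x
      = ∑ j, ∑ k, pd n j (pd2 n k k (fun z => g z i j)) x := by
    calc ∑ j, ∑ k, pd n j (pd2 n k j (fun z => g z k i)) x
        = ∑ j, ∑ k, pd n k (pd2 n j j (fun z => g z i k)) x := by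
          refine Finset.sum_congr rfl fun j _ => Finset.sum_congr rfl fun k _ => ?_
          rw [hGsymm k i]
          exact t_swap12 j k j (hg i k) x
      _ = ∑ k, ∑ j, pd n k (pd2 n j j (fun z => g z i k)) x := Finset.sum_comm
  have h2 : ∑ j, ∑ k, pd n j (pd2 n k i (fun z => g z k j)) x
      = ∑ k, ∑ j, pd n i (pd2 n k j (fun z => g z k j)) x := by
    calc ∑ j, ∑ k, pd n j (pd2 n k i (fun z => g z k j)) x
        = ∑ j, ∑ k, pd n i (pd2 n k j (fun z => g z k j)) x := by
          refine Finset.sum_congr rfl fun j _ => Finset.sum_congr rfl fun k _ => ?_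
          calc pd n j (pd2 n k i (fun z => g z k j)) x
              = pd n j (pd2 n i k (fun z => g z k j)) x := t_swap23 j k i (hg k j) x
            _ = pd n i (pd2 n j k (fun z => g z k j)) x := t_swap12 j i k (hg k j) x
            _ = pd n i (pd2 n k j (fun z => g z k j)) x := t_swap23 i j k (hg k j) x
      _ = ∑ k, ∑ j, pd n i (pd2 n k j (fun z => g z k j)) x := Finset.sum_comm
  have h4 : ∑ j, ∑ k, pd n j (pd2 n i j (fun z => g z k k)) x
      = ∑ k, ∑ j, pd n i (pd2 n j j (fun z => g z k k)) x := by
    calc ∑ j, ∑ k, pd n j (pd2 n i j (fun z => g z k k)) x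
        = ∑ j, ∑ k, pd n i (pd2 n j j (fun z => g z k k)) x :=
          Finset.sum_congr rfl fun j _ => Finset.sum_congr rfl fun k _ =>
            t_swap12 j i j (hg k k) x
      _ = ∑ k, ∑ j, pd n i (pd2 n j j (fun z => g z k k)) x := Finset.sum_comm
  simp only [Finset.sum_add_distrib, Finset.sum_sub_distrib, Finset.sum_neg_distrib]
  rw [h3, h2, h4]
  ring

include hg in
lemma Bdiag (x : E n) : ∑ i, Bfun g i i x = 2 * Sfun g x := by
  unfold Bfun Sfun
  have hX : ∑ i : Fin n, ∑ k : Fin n, pd2 n k i (fun z => g z k i) x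
      = ∑ k : Fin n, ∑ j : Fin n, pd2 n k j (fun z => g z k j) x := Finset.sum_comm
  have hY : ∑ i : Fin n, ∑ k : Fin n, pd2 n k k (fun z => g z i i) x
      = ∑ k : Fin n, ∑ j : Fin n, pd2 n j j (fun z => g z k k) x := rfl
  have hZ : ∑ i : Fin n, ∑ k : Fin n, pd2 n i i (fun z => g z k k) x
      = ∑ k : Fin n, ∑ j : Fin n, pd2 n j j (fun z => g z k k) x := Finset.sum_comm
  simp only [Finset.sum_add_distrib, Finset.sum_sub_distrib, Finset.sum_neg_distrib,
    Finset.mul_sum]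
  rw [hX, hY, hZ]
  ring

include hg in
lemma divF1 (x : E n) : ∑ j, pd n j (F1fun g j) x = -(Sfun g x) := by
  unfold F1fun Sfun
  have expand : ∀ j : Fin n, pd n j (fun y => ∑ k, (pd n k (fun z => g z k j) y
      - pd n j (fun z => g z k k) y)) x
      = ∑ k, (pd n j (pd n k (fun z => g z k j)) x - pd n j (pd n j (fun z => g z k k)) x) := by
    intro j
    rw [pd_sum]
    · exact Finset.sum_congr rfl fun k _ => pd_comb2 j x
        (diffAt_pd k (hg k j) x) (diffAt_pd j (hg k k) x)
    · intro k _
      exact ((((contDiff_pd k (hg k j)).sub (contDiff_pd j (hg k k))).differentiable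
        (by simp))).differentiableAt
  simp only [expand]
  have h1 : ∑ j : Fin n, ∑ k : Fin n, pd n j (pd n k (fun z => g z k j)) x
      = ∑ k : Fin n, ∑ j : Fin n, pd2 n k j (fun z => g z k j) x := by
    calc ∑ j : Fin n, ∑ k : Fin n, pd n j (pd n k (fun z => g z k j)) x
        = ∑ j : Fin n, ∑ k : Fin n, pd n k (pd n j (fun z => g z k j)) x :=
          Finset.sum_congr rfl fun j _ => Finset.sum_congr rfl fun k _ =>
            pd_comm j k (hg k j) x
      _ = ∑ k : Fin n, ∑ j : Fin n, pd n k (pd n j (fun z => g z k j)) x := Finset.sum_comm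
  have h2 : ∑ j : Fin n, ∑ k : Fin n, pd n j (pd n j (fun z => g z k k)) x
      = ∑ k : Fin n, ∑ j : Fin n, pd2 n j j (fun z => g z k k) x := Finset.sum_comm
  simp only [Finset.sum_add_distrib, Finset.sum_sub_distrib, Finset.sum_neg_distrib]
  rw [h1, h2]
  ring

include hg in
lemma divF2 (x : E n) : ∑ i, pd n i (fun y => Sfun g y * y i) x
    = (∑ i, pd n i (Sfun g) x * x i) + (n : ℝ) * Sfun g x := by
  have expand : ∀ i : Fin n, pd n i (fun y => Sfun g y * y i) x
      = pd n i (Sfun g) x * x i + Sfun g x := by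
    intro i
    rw [pd_mul i x ((contDiff_Sfun g hg).differentiable (by simp)).differentiableAt
      (((contDiff_coord i).differentiable (by simp)).differentiableAt), pd_coord]
    simp
  simp only [expand]
  rw [Finset.sum_add_distrib, Finset.sum_const, Finset.card_univ, Fintype.card_fin,
    nsmul_eq_mul]

include hg hsymm in
lemma divFL (x : E n) : ∑ j, pd n j (fun y => ∑ i, Bfun g i j y * y i) x
    = (∑ i, pd n i (Sfun g) x * x i) + 2 * Sfun g x := by
  have expand : ∀ j : Fin n, pd n j (fun y => ∑ i, Bfun g i j y * y i) x
      = ∑ i, (pd n j (Bfun g i j) x * x i + Bfun g i j x * (if i = j then 1 else 0)) := by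
    intro j
    rw [pd_sum]
    · refine Finset.sum_congr rfl fun i _ => ?_
      rw [pd_mul j x ((contDiff_Bfun g hg i j).differentiable (by simp)).differentiableAt
        (((contDiff_coord i).differentiable (by simp)).differentiableAt), pd_coord]
    · intro i _
      exact (((contDiff_Bfun g hg i j).mul (contDiff_coord i)).differentiable
        (by simp)).differentiableAt
  simp only [expand]
  simp only [Finset.sum_add_distrib, mul_ite, mul_one, mul_zero, Finset.sum_ite_eq',
    Finset.mem_univ, if_true]
  rw [Bdiag g hg x]
  congr 1
  rw [Finset.sum_comm]
  exact Finset.sum_congr rfl fun i _ => by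
    rw [← Finset.sum_mul, pdB_sum g hg hsymm i x]

include hg hsymm in
lemma pointwise_identity (x : E n) :
    ∑ j, pd n j (fun y => ∑ i, Bfun g i j y * y i) x
      = ((n : ℝ) - 2) * (∑ j, pd n j (F1fun g j) x)
        + ∑ i, pd n i (fun y => Sfun g y * y i) x := by
  rw [divFL g hg hsymm x, divF1 g hg x, divF2 g hg x]
  ring

end Main2

/-- For a smooth symmetric 2-tensor g on ℝⁿ and a bounded open set D whose
(Lipschitz) boundary Σ = ∂D carries an outward unit normal ν for which the
Euclidean divergence theorem holds, with Xⁱ = xⁱ one has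
∫_Σ (−g_{ki,kj} − g_{kj,ki} + g_{ij,kk} + g_{kk,ij}) xⁱ νʲ dσ
  = (n−2) ∫_Σ (g_{kj,k} − g_{kk,j}) νʲ dσ + ∫_Σ (−g_{kj,kj} + g_{kk,jj}) xⁱ νⁱ dσ,
where dσ is (n−1)-dimensional Hausdorff measure on Σ. -/
theorem boundary_identity_for_mass (n : ℕ)
    (g : E n → Matrix (Fin n) (Fin n) ℝ)
    (hg : ∀ i j, ContDiff ℝ (⊤ : ℕ∞) (fun x => g x i j))
    (hsymm : ∀ x i j, g x i j = g x j i)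
    (D : Set (E n)) (hD : IsOpen D) (hDb : Bornology.IsBounded D)
    (ν : E n → E n)
    (hdiv : ∀ F : Fin n → E n → ℝ, (∀ i, ContDiff ℝ (⊤ : ℕ∞) (F i)) →
      (∫ x in D, (∑ i, pd n i (F i) x)) =
        ∫ x in frontier D, (∑ i, F i x * ν x i) ∂(μH[(n : ℝ) - 1])) :
    (∫ x in frontier D,
        (∑ i, ∑ j, (∑ k, (-pd2 n k j (fun y => g y k i) x
              - pd2 n k i (fun y => g y k j) x
              + pd2 n k k (fun y => g y i j) x
              + pd2 n i j (fun y => g y k k) x)) * x i * ν x j)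
        ∂(μH[(n : ℝ) - 1]))
      = ((n : ℝ) - 2) *
          (∫ x in frontier D,
            (∑ j, (∑ k, (pd n k (fun y => g y k j) x
                - pd n j (fun y => g y k k) x)) * ν x j) ∂(μH[(n : ℝ) - 1]))
        + ∫ x in frontier D,
            ((∑ k, ∑ j, (-pd2 n k j (fun y => g y k j) x
                + pd2 n j j (fun y => g y k k) x)) * ∑ i, x i * ν x i)
            ∂(μH[(n : ℝ) - 1]) := by
  -- the three vector fields
  set FL : Fin n → E n → ℝ := fun j y => ∑ i, Bfun g i j y * y i with hFLdef
  set F2 : Fin n → E n → ℝ := fun i y => Sfun g y * y i with hF2def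
  have hFL : ∀ j, ContDiff ℝ (⊤ : ℕ∞) (FL j) := fun j => contDiff_FL g hg j
  have hF1 : ∀ j, ContDiff ℝ (⊤ : ℕ∞) (F1fun g j) := fun j => contDiff_F1fun g hg j
  have hF2 : ∀ i, ContDiff ℝ (⊤ : ℕ∞) (F2 i) := fun i => contDiff_F2 g hg i
  -- rewrite the left-hand boundary integrand
  have eL : (fun x : E n => ∑ i, ∑ j, (∑ k, (-pd2 n k j (fun y => g y k i) x
              - pd2 n k i (fun y => g y k j) x
              + pd2 n k k (fun y => g y i j) x
              + pd2 n i j (fun y => g y k k) x)) * x i * ν x j)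
      = fun x => ∑ j, FL j x * ν x j := by
    funext x
    rw [Finset.sum_comm]
    refine Finset.sum_congr rfl fun j _ => ?_
    rw [hFLdef]
    simp only [Bfun]
    rw [Finset.sum_mul]
  -- rewrite the second right-hand boundary integrand
  have eR : (fun x : E n => (∑ k, ∑ j, (-pd2 n k j (fun y => g y k j) x
                + pd2 n j j (fun y => g y k k) x)) * ∑ i, x i * ν x i)
      = fun x => ∑ i, F2 i x * ν x i := by
    funext x
    rw [hF2def]
    simp only [Sfun]
    rw [Finset.mul_sum]
    exact Finset.sum_congr rfl fun i _ => by ring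
  have eR1 : (fun x : E n => ∑ j, (∑ k, (pd n k (fun y => g y k j) x
                - pd n j (fun y => g y k k) x)) * ν x j)
      = fun x => ∑ j, F1fun g j x * ν x j := rfl
  rw [eL, eR, eR1, ← hdiv FL hFL, ← hdiv F2 hF2, ← hdiv (F1fun g) hF1]
  -- integrability on D
  have hK : IsCompact (closure D) :=
    Metric.isCompact_of_isClosed_isBounded isClosed_closure hDb.closure
  have int1 : IntegrableOn (fun x => ∑ j, pd n j (F1fun g j) x) D volume := by
    refine ((ContinuousOn.integrableOn_compact hK ?_).mono_set subset_closure)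
    exact (continuous_finset_sum _ fun j _ =>
      ((contDiff_pd j (hF1 j)).continuous)).continuousOn
  have int2 : IntegrableOn (fun x => ∑ i, pd n i (F2 i) x) D volume := by
    refine ((ContinuousOn.integrableOn_compact hK ?_).mono_set subset_closure)
    exact (continuous_finset_sum _ fun i _ =>
      ((contDiff_pd i (hF2 i)).continuous)).continuousOn
  calc (∫ x in D, ∑ j, pd n j (FL j) x)
      = ∫ x in D, (((n : ℝ) - 2) * (∑ j, pd n j (F1fun g j) x)
          + ∑ i, pd n i (F2 i) x) := by
        refine integral_congr_ae (Filter.Eventually.of_forall fun x => ?_)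
        exact pointwise_identity g hg hsymm x
    _ = ((n : ℝ) - 2) * (∫ x in D, ∑ j, pd n j (F1fun g j) x)
          + ∫ x in D, ∑ i, pd n i (F2 i) x := by
        rw [integral_add (int1.const_mul _) int2, MeasureTheory.integral_const_mul]
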